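/- arXiv:math/0610770 — 2 statements merged into one kernel-verified Lean document; each statement's English description precedes it below -/
import Mathlib

section
/- There exist constants ε₀ = ε₀(n) > 0 and c₁ = c₁(n) > 0, depending only on n, such that for every admissible cutoff ξ, every ε with |ε| < ε₀, and every function u : ℝⁿ → ℝ that is differentiable on B₁(0), one has (1 − c₁|ε|) ∫_{B₁(0)} |∇u|² dx ≤ ∫_{B₁(0)} |∇(u ∘ f_ε)|² dx ≤ (1 + c₁|ε|) ∫_{B₁(0)} |∇u|² dx, where the integrals are with respect to Lebesgue measure. -/
open Set MeasureTheory Metric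

noncomputable section

/-- An admissible cutoff: a smooth function `ξ` on `[0,1)` with `0 ≤ ξ ≤ 1`,
`ξ ≡ 1` on `[0,1/4]`, `ξ ≡ 0` on `[1/2,1)` and `|ξ'| ≤ 8` on `[0,1)`. -/
def AdmissibleCutoff (ξ : ℝ → ℝ) : Prop :=
  ContDiffOn ℝ (⊤ : ℕ∞) ξ (Set.Ico 0 1) ∧
  (∀ r ∈ Set.Ico (0:ℝ) 1, 0 ≤ ξ r ∧ ξ r ≤ 1) ∧
  (∀ r ∈ Set.Icc (0:ℝ) (1/4 : ℝ), ξ r = 1) ∧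
  (∀ r ∈ Set.Ico (1/2 : ℝ) 1, ξ r = 0) ∧
  (∀ r ∈ Set.Ico (0:ℝ) 1, |derivWithin ξ (Set.Ico 0 1) r| ≤ 8)

/-- The index of the last coordinate of `ℝⁿ`. -/
def lastCoord (n : ℕ) (hn : 0 < n) : Fin n := ⟨n - 1, Nat.sub_lt hn one_pos⟩

/-- For `x = (x', xₙ) ∈ ℝⁿ⁻¹ × ℝ`, the norm `|x'|` of the first `n-1` coordinates. -/
def primeNorm (n : ℕ) (hn : 0 < n) (x : EuclideanSpace ℝ (Fin n)) : ℝ :=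
  ‖x - (x (lastCoord n hn)) • EuclideanSpace.single (lastCoord n hn) (1:ℝ)‖

/-- The deformation map `f_ε(x', xₙ) = (x', xₙ + ε ξ(|x'|) ξ(|xₙ|))`. -/
def deformMap (n : ℕ) (hn : 0 < n) (ξ : ℝ → ℝ) (ε : ℝ)
    (x : EuclideanSpace ℝ (Fin n)) : EuclideanSpace ℝ (Fin n) :=
  x + (ε * ξ (primeNorm n hn x) * ξ |x (lastCoord n hn)|) •
    EuclideanSpace.single (lastCoord n hn) (1:ℝ)


namespace Stmt1Aux


variable {n : ℕ}

lemma norm_sq_eq (x : EuclideanSpace ℝ (Fin n)) : ‖x‖ ^ 2 = ∑ i, x i ^ 2 := by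
  rw [EuclideanSpace.norm_eq, Real.sq_sqrt (by positivity)]
  simp [sq_abs]

lemma abs_coord_le (x : EuclideanSpace ℝ (Fin n)) (i : Fin n) : |x i| ≤ ‖x‖ := by
  have h : x i ^ 2 ≤ ‖x‖ ^ 2 := by
    rw [norm_sq_eq]
    exact Finset.single_le_sum (f := fun j => x j ^ 2) (fun _ _ => sq_nonneg _)
      (Finset.mem_univ i)
  calc |x i| = Real.sqrt (x i ^ 2) := (Real.sqrt_sq_eq_abs _).symm
    _ ≤ Real.sqrt (‖x‖ ^ 2) := Real.sqrt_le_sqrt h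
    _ = ‖x‖ := by rw [Real.sqrt_sq (norm_nonneg _)]

lemma norm_add_single_sq (hn : 0 < n) (z : EuclideanSpace ℝ (Fin n))
    (hz : z (lastCoord n hn) = 0) (t : ℝ) :
    ‖z + t • EuclideanSpace.single (lastCoord n hn) (1:ℝ)‖ ^ 2 = ‖z‖ ^ 2 + t ^ 2 := by
  set L := lastCoord n hn
  have h1 : ∀ i, ((z + t • EuclideanSpace.single L (1:ℝ)) i) ^ 2
      = z i ^ 2 + (if i = L then t ^ 2 else 0) := by
    intro i
    by_cases h : i = L
    · subst h
      simp [hz, EuclideanSpace.single_apply]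
    · simp [h, EuclideanSpace.single_apply]
  rw [norm_sq_eq, norm_sq_eq]
  simp_rw [h1]
  rw [Finset.sum_add_distrib, Finset.sum_ite_eq' Finset.univ L (fun _ => t ^ 2)]
  simp



lemma primeNorm_nonneg (hn : 0 < n) (x : EuclideanSpace ℝ (Fin n)) :
    0 ≤ primeNorm n hn x := norm_nonneg _

lemma decomp (hn : 0 < n) (x : EuclideanSpace ℝ (Fin n)) :
    (x - x (lastCoord n hn) • EuclideanSpace.single (lastCoord n hn) (1:ℝ))
      + x (lastCoord n hn) • EuclideanSpace.single (lastCoord n hn) (1:ℝ) = x :=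
  sub_add_cancel _ _

lemma proj_last_eq_zero (hn : 0 < n) (x : EuclideanSpace ℝ (Fin n)) :
    (x - x (lastCoord n hn) • EuclideanSpace.single (lastCoord n hn) (1:ℝ))
      (lastCoord n hn) = 0 := by
  simp [EuclideanSpace.single_apply]

lemma norm_sq_decomp (hn : 0 < n) (x : EuclideanSpace ℝ (Fin n)) :
    ‖x‖ ^ 2 = primeNorm n hn x ^ 2 + x (lastCoord n hn) ^ 2 := by
  conv_lhs => rw [← decomp hn x]
  rw [norm_add_single_sq hn _ (proj_last_eq_zero hn x)]
  rfl

lemma primeNorm_le (hn : 0 < n) (x : EuclideanSpace ℝ (Fin n)) :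
    primeNorm n hn x ≤ ‖x‖ := by
  have h := norm_sq_decomp hn x
  nlinarith [primeNorm_nonneg hn x, norm_nonneg x, sq_nonneg (x (lastCoord n hn))]

lemma primeNorm_sub_le (hn : 0 < n) (x y : EuclideanSpace ℝ (Fin n)) :
    |primeNorm n hn x - primeNorm n hn y| ≤ ‖x - y‖ := by
  set L := lastCoord n hn
  have key : (x - x L • EuclideanSpace.single L (1:ℝ))
      - (y - y L • EuclideanSpace.single L (1:ℝ))
      = (x - y) - (x - y) L • EuclideanSpace.single L (1:ℝ) := by
    have : (x - y) L = x L - y L := rfl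
    rw [this, sub_smul]
    abel
  calc |primeNorm n hn x - primeNorm n hn y|
      ≤ ‖(x - x L • EuclideanSpace.single L (1:ℝ))
          - (y - y L • EuclideanSpace.single L (1:ℝ))‖ := abs_norm_sub_norm_le _ _
    _ = primeNorm n hn (x - y) := by rw [key]; rfl
    _ ≤ ‖x - y‖ := primeNorm_le hn _

lemma cutoff_lip {ξ : ℝ → ℝ} (hξ : AdmissibleCutoff ξ) {a b : ℝ}
    (ha : a ∈ Set.Ico (0:ℝ) 1) (hb : b ∈ Set.Ico (0:ℝ) 1) :
    |ξ a - ξ b| ≤ 8 * |a - b| := by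
  have := (convex_Ico (0:ℝ) 1).norm_image_sub_le_of_norm_derivWithin_le
    (hξ.1.differentiableOn (by simp)) (fun r hr => by
      simpa using hξ.2.2.2.2 r hr) hb ha
  simpa [Real.norm_eq_abs] using this

/-- The scalar bump function. -/
def gf (n : ℕ) (hn : 0 < n) (ξ : ℝ → ℝ) (ε : ℝ) (x : EuclideanSpace ℝ (Fin n)) : ℝ :=
  ε * ξ (primeNorm n hn x) * ξ |x (lastCoord n hn)|

lemma deformMap_eq (hn : 0 < n) (ξ : ℝ → ℝ) (ε : ℝ) (x : EuclideanSpace ℝ (Fin n)) :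
    deformMap n hn ξ ε x
      = x + gf n hn ξ ε x • EuclideanSpace.single (lastCoord n hn) (1:ℝ) := rfl

lemma pn_mem (hn : 0 < n) {x : EuclideanSpace ℝ (Fin n)} (hx : x ∈ Metric.ball 0 1) :
    primeNorm n hn x ∈ Set.Ico (0:ℝ) 1 :=
  ⟨primeNorm_nonneg hn x, lt_of_le_of_lt (primeNorm_le hn x) (mem_ball_zero_iff.1 hx)⟩

lemma q_mem (hn : 0 < n) {x : EuclideanSpace ℝ (Fin n)} (hx : x ∈ Metric.ball 0 1) :
    |x (lastCoord n hn)| ∈ Set.Ico (0:ℝ) 1 :=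
  ⟨abs_nonneg _, lt_of_le_of_lt (abs_coord_le x _) (mem_ball_zero_iff.1 hx)⟩

variable {ξ : ℝ → ℝ} {ε : ℝ}

lemma phi_diff (hn : 0 < n) (hξ : AdmissibleCutoff ξ) {x : EuclideanSpace ℝ (Fin n)}
    (hx : x ∈ Metric.ball 0 1) :
    DifferentiableAt ℝ (fun y => ξ (primeNorm n hn y)) x := by
  by_cases h : primeNorm n hn x < 1/4
  · have hev : (fun y => ξ (primeNorm n hn y)) =ᶠ[nhds x] fun _ => (1:ℝ) := by
      filter_upwards [Metric.ball_mem_nhds x (show (0:ℝ) < 1/4 - primeNorm n hn x by linarith)]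
        with y hy
      have hd : ‖y - x‖ < 1/4 - primeNorm n hn x := by rwa [mem_ball, dist_eq_norm] at hy
      have h2 := abs_le.1 (primeNorm_sub_le hn y x)
      exact hξ.2.2.1 _ ⟨primeNorm_nonneg hn y, by linarith [h2.2]⟩
    exact (differentiableAt_const (1:ℝ)).congr_of_eventuallyEq hev
  · push_neg at h
    have hpx1 : primeNorm n hn x < 1 := (pn_mem hn hx).2
    have hξd : DifferentiableAt ℝ ξ (primeNorm n hn x) :=
      (hξ.1.contDiffAt (Filter.mem_of_superset
        (Ioo_mem_nhds (by linarith) hpx1) Set.Ioo_subset_Ico_self)).differentiableAt (by simp)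
    set L := lastCoord n hn
    have hproj : DifferentiableAt ℝ (fun y : EuclideanSpace ℝ (Fin n) => y L) x :=
      (EuclideanSpace.proj (𝕜 := ℝ) L).differentiableAt
    have hP : DifferentiableAt ℝ
        (fun y : EuclideanSpace ℝ (Fin n) => y - y L • EuclideanSpace.single L (1:ℝ)) x :=
      differentiableAt_id.sub (hproj.smul_const _)
    have hPx : (x - x L • EuclideanSpace.single L (1:ℝ)) ≠ 0 := by
      intro h0
      have : primeNorm n hn x = 0 := by rw [primeNorm, h0, norm_zero]
      linarith
    exact hξd.comp x (hP.norm ℝ hPx)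

lemma psi_diff (hn : 0 < n) (hξ : AdmissibleCutoff ξ) {x : EuclideanSpace ℝ (Fin n)}
    (hx : x ∈ Metric.ball 0 1) :
    DifferentiableAt ℝ (fun y => ξ |y (lastCoord n hn)|) x := by
  set L := lastCoord n hn
  by_cases h : |x L| < 1/4
  · have hev : (fun y => ξ |y L|) =ᶠ[nhds x] fun _ => (1:ℝ) := by
      filter_upwards [Metric.ball_mem_nhds x (show (0:ℝ) < 1/4 - |x L| by linarith)]
        with y hy
      have hd : ‖y - x‖ < 1/4 - |x L| := by rwa [mem_ball, dist_eq_norm] at hy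
      have h2 : |y L - x L| ≤ ‖y - x‖ := abs_coord_le (y - x) L
      have h3 : |y L| - |x L| ≤ |y L - x L| := abs_sub_abs_le_abs_sub _ _
      exact hξ.2.2.1 _ ⟨abs_nonneg _, by linarith⟩
    exact (differentiableAt_const (1:ℝ)).congr_of_eventuallyEq hev
  · push_neg at h
    have hq1 : |x L| < 1 := (q_mem hn hx).2
    have hξd : DifferentiableAt ℝ ξ |x L| :=
      (hξ.1.contDiffAt (Filter.mem_of_superset
        (Ioo_mem_nhds (by linarith) hq1) Set.Ioo_subset_Ico_self)).differentiableAt (by simp)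
    have hx0 : x L ≠ 0 := by
      intro h0; rw [h0] at h; simp at h; linarith
    have hproj : DifferentiableAt ℝ (fun y : EuclideanSpace ℝ (Fin n) => y L) x :=
      (EuclideanSpace.proj (𝕜 := ℝ) L).differentiableAt
    exact hξd.comp x ((differentiableAt_abs hx0).comp x hproj :
      DifferentiableAt ℝ ((fun t : ℝ => |t|) ∘ fun y : EuclideanSpace ℝ (Fin n) => y L) x)

lemma gf_diff (hn : 0 < n) (hξ : AdmissibleCutoff ξ) {x : EuclideanSpace ℝ (Fin n)}
    (hx : x ∈ Metric.ball 0 1) :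
    DifferentiableAt ℝ (gf n hn ξ ε) x :=
  ((differentiableAt_const ε).mul (phi_diff hn hξ hx)).mul (psi_diff hn hξ hx)

lemma xi_mem_01 (hξ : AdmissibleCutoff ξ) {r : ℝ} (hr : r ∈ Set.Ico (0:ℝ) 1) :
    0 ≤ ξ r ∧ ξ r ≤ 1 := hξ.2.1 r hr

lemma gf_lip (hn : 0 < n) (hξ : AdmissibleCutoff ξ) {x y : EuclideanSpace ℝ (Fin n)}
    (hx : x ∈ Metric.ball 0 1) (hy : y ∈ Metric.ball 0 1) :
    |gf n hn ξ ε x - gf n hn ξ ε y| ≤ 16 * |ε| * ‖x - y‖ := by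
  set L := lastCoord n hn with hL
  set px := primeNorm n hn x with hpxd
  set py := primeNorm n hn y with hpyd
  set qx := |x L| with hqxd
  set qy := |y L| with hqyd
  have hpx := pn_mem hn hx; have hpy := pn_mem hn hy
  have hqx := q_mem hn hx; have hqy := q_mem hn hy
  rw [← hpxd] at hpx; rw [← hpyd] at hpy
  have h1 : |ξ px - ξ py| ≤ 8 * ‖x - y‖ := by
    calc |ξ px - ξ py| ≤ 8 * |px - py| := cutoff_lip hξ hpx hpy
      _ ≤ 8 * ‖x - y‖ := by
          have := primeNorm_sub_le hn x y
          rw [← hpxd, ← hpyd] at this; linarith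
  have h2 : |ξ qx - ξ qy| ≤ 8 * ‖x - y‖ := by
    have c1 : |ξ qx - ξ qy| ≤ 8 * |qx - qy| := cutoff_lip hξ hqx hqy
    have c2 : |qx - qy| ≤ |x L - y L| := by
      rw [hqxd, hqyd]; exact abs_abs_sub_abs_le_abs_sub (x L) (y L)
    have c3 : |x L - y L| ≤ ‖x - y‖ := abs_coord_le (x - y) L
    linarith
  have hbx := xi_mem_01 hξ hpx
  have hby := xi_mem_01 hξ hqy
  have key : |ξ px * ξ qx - ξ py * ξ qy| ≤ 16 * ‖x - y‖ := by
    have e1 : ξ px * ξ qx - ξ py * ξ qy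
        = ξ px * (ξ qx - ξ qy) + ξ qy * (ξ px - ξ py) := by ring
    rw [e1]
    have hbx1 : |ξ px| ≤ 1 := by rw [abs_of_nonneg hbx.1]; exact hbx.2
    have hby1 : |ξ qy| ≤ 1 := by
      rw [hqyd, abs_of_nonneg hby.1]; exact hby.2
    have t1 : |ξ px * (ξ qx - ξ qy)| ≤ 1 * (8 * ‖x - y‖) := by
      rw [abs_mul]
      exact mul_le_mul hbx1 h2 (abs_nonneg _) one_pos.le
    have t2 : |ξ qy * (ξ px - ξ py)| ≤ 1 * (8 * ‖x - y‖) := by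
      rw [abs_mul]
      exact mul_le_mul hby1 h1 (abs_nonneg _) one_pos.le
    calc |ξ px * (ξ qx - ξ qy) + ξ qy * (ξ px - ξ py)|
        ≤ |ξ px * (ξ qx - ξ qy)| + |ξ qy * (ξ px - ξ py)| := abs_add_le _ _
      _ ≤ 1 * (8 * ‖x - y‖) + 1 * (8 * ‖x - y‖) := add_le_add t1 t2
      _ = 16 * ‖x - y‖ := by ring
  have e2 : gf n hn ξ ε x - gf n hn ξ ε y = ε * (ξ px * ξ qx - ξ py * ξ qy) := by
    simp only [gf, ← hL, ← hpxd, ← hpyd, ← hqxd, ← hqyd]; ring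
  rw [e2, abs_mul]
  calc |ε| * |ξ px * ξ qx - ξ py * ξ qy| ≤ |ε| * (16 * ‖x - y‖) :=
        mul_le_mul_of_nonneg_left key (abs_nonneg ε)
    _ = 16 * |ε| * ‖x - y‖ := by ring

lemma gf_fderiv_norm (hn : 0 < n) (hξ : AdmissibleCutoff ξ) {x : EuclideanSpace ℝ (Fin n)}
    (hx : x ∈ Metric.ball 0 1) :
    ‖fderiv ℝ (gf n hn ξ ε) x‖ ≤ 16 * |ε| := by
  refine (gf_diff hn hξ hx).hasFDerivAt.le_of_lip' (by positivity) ?_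
  filter_upwards [isOpen_ball.mem_nhds hx] with y hy
  have := gf_lip (ε := ε) hn hξ hy hx
  simpa [Real.norm_eq_abs] using this

/-- `Amap D = id + D ⊗ eₙ`. -/
def Amap (hn : 0 < n) (D : EuclideanSpace ℝ (Fin n) →L[ℝ] ℝ) :
    EuclideanSpace ℝ (Fin n) →L[ℝ] EuclideanSpace ℝ (Fin n) :=
  ContinuousLinearMap.id ℝ _ + D.smulRight (EuclideanSpace.single (lastCoord n hn) (1:ℝ))

lemma Amap_apply (hn : 0 < n) (D : EuclideanSpace ℝ (Fin n) →L[ℝ] ℝ)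
    (v : EuclideanSpace ℝ (Fin n)) :
    Amap hn D v = v + D v • EuclideanSpace.single (lastCoord n hn) (1:ℝ) := rfl

lemma Amap_norm_le (hn : 0 < n) (D : EuclideanSpace ℝ (Fin n) →L[ℝ] ℝ) :
    ‖Amap hn D‖ ≤ 1 + ‖D‖ := by
  refine (norm_add_le _ _).trans ?_
  have h1 : ‖ContinuousLinearMap.id ℝ (EuclideanSpace ℝ (Fin n))‖ ≤ 1 :=
    ContinuousLinearMap.norm_id_le
  have h2 : ‖D.smulRight (EuclideanSpace.single (lastCoord n hn) (1:ℝ))‖ = ‖D‖ := by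
    rw [ContinuousLinearMap.norm_smulRight_apply, EuclideanSpace.norm_single]
    simp
  rw [h2]; linarith

lemma Amap_det (hn : 0 < n) (D : EuclideanSpace ℝ (Fin n) →L[ℝ] ℝ) :
    (Amap hn D).det = 1 + D (EuclideanSpace.single (lastCoord n hn) (1:ℝ)) := by
  classical
  set L := lastCoord n hn with hLdef
  set b := (EuclideanSpace.basisFun (Fin n) ℝ).toBasis with hb
  set M := LinearMap.toMatrix b b ((Amap hn D) : _ →ₗ[ℝ] _) with hM
  have hdet : (Amap hn D).det = M.det := (LinearMap.det_toMatrix b _).symm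
  rw [hdet]
  have hMij : ∀ i j, M i j = (if i = j then (1:ℝ) else 0)
      + D (EuclideanSpace.single j (1:ℝ)) * (if i = L then 1 else 0) := by
    intro i j
    rw [hM, LinearMap.toMatrix_apply]
    have hbj : b j = EuclideanSpace.single j (1:ℝ) := by
      rw [hb, OrthonormalBasis.coe_toBasis, EuclideanSpace.basisFun_apply]
    have hrepr : ∀ z : EuclideanSpace ℝ (Fin n), b.repr z i = z i := fun z => by
      rw [hb, OrthonormalBasis.coe_toBasis_repr_apply, EuclideanSpace.basisFun_repr]
    rw [hbj, hrepr]
    show (EuclideanSpace.single j (1:ℝ)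
        + D (EuclideanSpace.single j (1:ℝ)) • EuclideanSpace.single L (1:ℝ)) i = _
    simp [EuclideanSpace.single_apply, eq_comm]
  have hLT : M.BlockTriangular OrderDual.toDual := by
    intro i j hij
    have hij' : i < j := hij
    have h1 : i ≠ j := ne_of_lt hij'
    have h2 : i ≠ L := by
      intro h
      have : (j : ℕ) < n := j.isLt
      have : (i : ℕ) < (j : ℕ) := hij'
      rw [h] at this
      simp only [hLdef, lastCoord] at this
      omega
    rw [hMij i j, if_neg h1, if_neg h2]
    ring
  rw [Matrix.det_of_lowerTriangular M hLT]
  rw [Finset.prod_eq_single L (fun i _ hi => by rw [hMij i i, if_pos rfl, if_neg hi]; ring)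
    (fun h => absurd (Finset.mem_univ L) h)]
  rw [hMij L L]
  simp

/-- Inverse of `Amap`. -/
def Bmap (hn : 0 < n) (D : EuclideanSpace ℝ (Fin n) →L[ℝ] ℝ) :
    EuclideanSpace ℝ (Fin n) →L[ℝ] EuclideanSpace ℝ (Fin n) :=
  ContinuousLinearMap.id ℝ _ -
    (((1 + D (EuclideanSpace.single (lastCoord n hn) (1:ℝ)))⁻¹) • D).smulRight
      (EuclideanSpace.single (lastCoord n hn) (1:ℝ))

lemma Bmap_apply (hn : 0 < n) (D : EuclideanSpace ℝ (Fin n) →L[ℝ] ℝ)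
    (v : EuclideanSpace ℝ (Fin n)) :
    Bmap hn D v = v - ((1 + D (EuclideanSpace.single (lastCoord n hn) (1:ℝ)))⁻¹ * D v) •
      EuclideanSpace.single (lastCoord n hn) (1:ℝ) := by
  simp [Bmap, ContinuousLinearMap.smulRight_apply, smul_smul]

lemma Bmap_norm_le (hn : 0 < n) (D : EuclideanSpace ℝ (Fin n) →L[ℝ] ℝ) :
    ‖Bmap hn D‖ ≤ 1 + |(1 + D (EuclideanSpace.single (lastCoord n hn) (1:ℝ)))⁻¹| * ‖D‖ := by
  refine (norm_sub_le _ _).trans ?_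
  have h1 : ‖ContinuousLinearMap.id ℝ (EuclideanSpace ℝ (Fin n))‖ ≤ 1 :=
    ContinuousLinearMap.norm_id_le
  have h2 : ‖(((1 + D (EuclideanSpace.single (lastCoord n hn) (1:ℝ)))⁻¹) • D).smulRight
      (EuclideanSpace.single (lastCoord n hn) (1:ℝ))‖
      = |(1 + D (EuclideanSpace.single (lastCoord n hn) (1:ℝ)))⁻¹| * ‖D‖ := by
    rw [ContinuousLinearMap.norm_smulRight_apply, EuclideanSpace.norm_single, norm_smul,
      norm_one, mul_one, Real.norm_eq_abs]
  rw [h2]; linarith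

lemma Amap_comp_Bmap (hn : 0 < n) (D : EuclideanSpace ℝ (Fin n) →L[ℝ] ℝ)
    (h : 1 + D (EuclideanSpace.single (lastCoord n hn) (1:ℝ)) ≠ 0) :
    (Amap hn D).comp (Bmap hn D) = ContinuousLinearMap.id ℝ _ := by
  refine ContinuousLinearMap.ext fun v => ?_
  set e := EuclideanSpace.single (lastCoord n hn) (1:ℝ) with he
  set a := D e with ha
  set c := (1 + a)⁻¹ with hc
  have hB : Bmap hn D v = v - (c * D v) • e := Bmap_apply hn D v
  have hDB : D (Bmap hn D v) = D v - c * D v * a := by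
    rw [hB, map_sub, ContinuousLinearMap.map_smul, smul_eq_mul, ← ha]
  have : (Amap hn D).comp (Bmap hn D) v = Bmap hn D v + D (Bmap hn D v) • e := rfl
  rw [this, hDB, hB]
  have hinv : c * (1 + a) = 1 := inv_mul_cancel₀ h
  have hs2 : D v - c * D v * a = c * D v := by linear_combination (-(D v)) * hinv
  show v - (c * D v) • e + (D v - c * D v * a) • e = v
  rw [hs2, sub_add_cancel]

lemma gf_abs_le (hn : 0 < n) (hξ : AdmissibleCutoff ξ) {x : EuclideanSpace ℝ (Fin n)}
    (hx : x ∈ Metric.ball 0 1) : |gf n hn ξ ε x| ≤ |ε| := by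
  have h1 := xi_mem_01 hξ (pn_mem hn hx)
  have h2 := xi_mem_01 hξ (q_mem hn hx)
  rw [gf, abs_mul, abs_mul]
  have e1 : |ξ (primeNorm n hn x)| ≤ 1 := by rw [abs_of_nonneg h1.1]; exact h1.2
  have e2 : abs (ξ (abs (x (lastCoord n hn)))) ≤ 1 := by
    rw [abs_of_nonneg h2.1]; exact h2.2
  calc |ε| * |ξ (primeNorm n hn x)| * abs (ξ (abs (x (lastCoord n hn))))
      ≤ |ε| * 1 * 1 :=
        mul_le_mul (mul_le_mul le_rfl e1 (abs_nonneg _) (abs_nonneg _)) e2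
          (abs_nonneg _) (by positivity)
    _ = |ε| := by ring

lemma gf_eq_zero_of (hn : 0 < n) (hξ : AdmissibleCutoff ξ) {x : EuclideanSpace ℝ (Fin n)}
    (hx : x ∈ Metric.ball 0 1)
    (h : 1/2 ≤ primeNorm n hn x ∨ 1/2 ≤ |x (lastCoord n hn)|) :
    gf n hn ξ ε x = 0 := by
  rcases h with h | h
  · rw [gf, hξ.2.2.2.1 _ ⟨h, (pn_mem hn hx).2⟩]
    ring
  · rw [gf, hξ.2.2.2.1 _ ⟨h, (q_mem hn hx).2⟩]
    ring

lemma deform_mem_ball (hn : 0 < n) (hξ : AdmissibleCutoff ξ) (hε : |ε| ≤ 1/100)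
    {x : EuclideanSpace ℝ (Fin n)} (hx : x ∈ Metric.ball 0 1) :
    deformMap n hn ξ ε x ∈ Metric.ball 0 1 := by
  set L := lastCoord n hn
  by_cases h : 1/2 ≤ primeNorm n hn x ∨ 1/2 ≤ |x L|
  · rw [deformMap_eq, gf_eq_zero_of hn hξ hx h, zero_smul, add_zero]
    exact hx
  · push_neg at h
    have hgf := gf_abs_le (ε := ε) hn hξ hx
    have hsplit : deformMap n hn ξ ε x
        = (x - x L • EuclideanSpace.single L (1:ℝ))
          + (x L + gf n hn ξ ε x) • EuclideanSpace.single L (1:ℝ) := by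
      rw [deformMap_eq, add_smul]
      abel
    rw [mem_ball_zero_iff]
    have hsq : ‖deformMap n hn ξ ε x‖ ^ 2
        = primeNorm n hn x ^ 2 + (x L + gf n hn ξ ε x) ^ 2 := by
      rw [hsplit, norm_add_single_sq hn _ (proj_last_eq_zero hn x)]
      rfl
    have h1 : primeNorm n hn x ^ 2 < 1/4 := by nlinarith [primeNorm_nonneg hn x, h.1]
    have h2 : (x L + gf n hn ξ ε x) ^ 2 < (3/5 : ℝ)^2 := by
      have ha : |x L + gf n hn ξ ε x| < 3/5 := by
        calc |x L + gf n hn ξ ε x| ≤ |x L| + |gf n hn ξ ε x| := abs_add_le _ _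
          _ < 3/5 := by linarith [h.2]
      nlinarith [abs_nonneg (x L + gf n hn ξ ε x), sq_abs (x L + gf n hn ξ ε x)]
    nlinarith [norm_nonneg (deformMap n hn ξ ε x), hsq]

lemma deform_injOn (hn : 0 < n) (hξ : AdmissibleCutoff ξ) (hε : |ε| ≤ 1/100) :
    Set.InjOn (deformMap n hn ξ ε) (Metric.ball 0 1) := by
  intro x hx y hy hxy
  set L := lastCoord n hn with hL
  have happ : ∀ i, x i + gf n hn ξ ε x * (if i = L then (1:ℝ) else 0)
      = y i + gf n hn ξ ε y * (if i = L then (1:ℝ) else 0) := by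
    intro i
    have := congrArg (fun z : EuclideanSpace ℝ (Fin n) => z i) hxy
    simpa [deformMap_eq, EuclideanSpace.single_apply, smul_eq_mul] using this
  have hcoord : ∀ i, i ≠ L → x i = y i := by
    intro i hi
    have := happ i
    rw [if_neg hi] at this
    simpa using this
  have hP : x - x L • EuclideanSpace.single L (1:ℝ)
      = y - y L • EuclideanSpace.single L (1:ℝ) := by
    ext i
    show x i - (x L • EuclideanSpace.single L (1:ℝ)) i
      = y i - (y L • EuclideanSpace.single L (1:ℝ)) i
    by_cases hi : i = L
    · rw [hi]
      simp [EuclideanSpace.single_apply]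
    · simp [EuclideanSpace.single_apply, hi, hcoord i hi]
  have hpn : primeNorm n hn x = primeNorm n hn y := by
    rw [primeNorm, primeNorm, hP]
  have hlast : x L + gf n hn ξ ε x = y L + gf n hn ξ ε y := by
    have := happ L
    rw [if_pos rfl] at this
    simpa using this
  have hxLyL : x L = y L := by
    by_contra hne
    set ax := |x L| with hax
    set ay := |y L| with hay
    have hd : x L - y L = ε * ξ (primeNorm n hn x) * (ξ ay - ξ ax) := by
      have hgfy : gf n hn ξ ε y = ε * ξ (primeNorm n hn x) * ξ ay := by
        rw [gf, hpn, hay]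
      rw [gf, ← hax] at hlast
      rw [hgfy] at hlast
      linarith [hlast]
    have hb1 := xi_mem_01 hξ (pn_mem hn hx)
    have hqx := q_mem hn hx
    have hqy := q_mem hn hy
    rw [← hax] at hqx; rw [← hay] at hqy
    have hlip : |ξ ay - ξ ax| ≤ 8 * |x L - y L| := by
      have c1 : |ξ ay - ξ ax| ≤ 8 * |ay - ax| := cutoff_lip hξ hqy hqx
      have c2 : |ay - ax| ≤ |y L - x L| := by
        rw [hay, hax]; exact abs_abs_sub_abs_le_abs_sub (y L) (x L)
      have c3 : |y L - x L| = |x L - y L| := abs_sub_comm _ _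
      linarith
    have hne' : 0 < |x L - y L| := abs_pos.2 (sub_ne_zero.2 hne)
    have hfin : |x L - y L| ≤ (8/100) * |x L - y L| := by
      calc |x L - y L| = |ε| * |ξ (primeNorm n hn x)| * |ξ ay - ξ ax| := by
            rw [hd, abs_mul, abs_mul]
        _ ≤ (1/100) * 1 * (8 * |x L - y L|) := by
            gcongr
            · rw [abs_of_nonneg hb1.1]; exact hb1.2
        _ = (8/100) * |x L - y L| := by ring
    linarith
  ext i
  by_cases hi : i = L
  · subst hi; exact hxLyL
  · exact hcoord i hi

lemma deform_image (hn : 0 < n) (hξ : AdmissibleCutoff ξ) (hε : |ε| ≤ 1/100) :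
    deformMap n hn ξ ε '' (Metric.ball 0 1) = Metric.ball 0 1 := by
  set L := lastCoord n hn with hL
  apply Set.Subset.antisymm
  · rintro _ ⟨x, hx, rfl⟩
    exact deform_mem_ball hn hξ hε hx
  · intro y hy
    by_cases h : 1/2 ≤ primeNorm n hn y ∨ 1/2 ≤ |y L|
    · exact ⟨y, hy, by rw [deformMap_eq, gf_eq_zero_of hn hξ hy h, zero_smul, add_zero]⟩
    · push_neg at h
      set s := ξ (primeNorm n hn y) with hs
      set F : ℝ → ℝ := fun t => t + ε * s * ξ |t| with hF
      have habs : Set.MapsTo (fun t : ℝ => |t|) (Set.Icc (-(1/2)) (1/2)) (Set.Ico 0 1) := by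
        intro t ht
        exact ⟨abs_nonneg t, lt_of_le_of_lt (abs_le.2 ⟨ht.1, ht.2⟩) (by norm_num)⟩
      have hFcont : ContinuousOn F (Set.Icc (-(1/2)) (1/2)) := by
        apply (continuousOn_id' _).add
        exact continuousOn_const.mul
          ((hξ.1.continuousOn).comp continuous_abs.continuousOn habs)
      have hxi_half : ξ (1/2 : ℝ) = 0 := hξ.2.2.2.1 _ ⟨le_refl _, by norm_num⟩
      have hFa : F (-(1/2)) = -(1/2) := by
        rw [hF]
        simp only [abs_neg, abs_of_nonneg (by norm_num : (0:ℝ) ≤ 1/2)]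
        rw [hxi_half]; ring
      have hFb : F (1/2) = 1/2 := by
        rw [hF]
        simp only [abs_of_nonneg (by norm_num : (0:ℝ) ≤ 1/2)]
        rw [hxi_half]; ring
      have hyL : y L ∈ Set.Icc (F (-(1/2))) (F (1/2)) := by
        rw [hFa, hFb]
        have := abs_le.1 (le_of_lt h.2)
        exact ⟨this.1, this.2⟩
      obtain ⟨t, ht, hFt⟩ := intermediate_value_Icc (by norm_num) hFcont hyL
      set x := (y - y L • EuclideanSpace.single L (1:ℝ)) + t • EuclideanSpace.single L (1:ℝ)
        with hxdef
      have hxL : x L = t := by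
        rw [hxdef]
        show y L - y L * _ + t * _ = t
        simp [EuclideanSpace.single_apply]
      have hPx : x - x L • EuclideanSpace.single L (1:ℝ)
          = y - y L • EuclideanSpace.single L (1:ℝ) := by
        rw [hxL, hxdef]
        abel
      have hpnx : primeNorm n hn x = primeNorm n hn y := by
        rw [primeNorm, primeNorm]
        rw [show x - x (lastCoord n hn) • EuclideanSpace.single (lastCoord n hn) (1:ℝ)
          = y - y (lastCoord n hn) • EuclideanSpace.single (lastCoord n hn) (1:ℝ) from hPx]
      have hxball : x ∈ Metric.ball (0 : EuclideanSpace ℝ (Fin n)) 1 := by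
        rw [mem_ball_zero_iff]
        have hsq : ‖x‖ ^ 2 = primeNorm n hn y ^ 2 + t ^ 2 := by
          rw [hxdef, norm_add_single_sq hn _ (proj_last_eq_zero hn y)]
          rfl
        have ht2 : t ^ 2 ≤ 1/4 := by
          have h1 := ht.1; have h2 := ht.2
          nlinarith
        have hpn2 : primeNorm n hn y ^ 2 < 1/4 := by
          nlinarith [primeNorm_nonneg hn y, h.1]
        nlinarith [norm_nonneg x]
      refine ⟨x, hxball, ?_⟩
      have hgfx : gf n hn ξ ε x = ε * s * ξ |t| := by
        rw [gf, hpnx, ← hL, hxL, hs]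
      rw [deformMap_eq, hgfx, hxdef, add_assoc, ← add_smul]
      have hFt' : t + ε * s * ξ |t| = y L := hFt
      rw [hFt', sub_add_cancel]

lemma real_upper {e S T d : ℝ} (he0 : 0 ≤ e) (he : e ≤ 1/100) (hS : 0 ≤ S)
    (hT2 : T^2 ≤ S^2 * (1+16*e)^2) (hd : 1 - 16*e ≤ d) :
    T^2 ≤ (1 + 100*e) * (d * S^2) := by
  nlinarith [mul_nonneg (mul_nonneg (sq_nonneg S) (by linarith : (0:ℝ) ≤ 1+100*e))
      (by linarith : (0:ℝ) ≤ d - (1-16*e)),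
    mul_nonneg (mul_nonneg (sq_nonneg S) he0) (by linarith : (0:ℝ) ≤ 52 - 1856*e)]

lemma real_lower {e S T d : ℝ} (he0 : 0 ≤ e) (he : e ≤ 1/100)
    (hS2 : S^2 ≤ T^2 * (1+20*e)^2) (hd : 0 ≤ d) (hdu : d ≤ 1+16*e) (hc : 0 < 1 - 100*e) :
    (1 - 100*e) * (d * S^2) ≤ T^2 := by
  nlinarith [mul_nonneg (mul_nonneg (by linarith : (0:ℝ) ≤ 1-100*e) hd)
      (by linarith : (0:ℝ) ≤ T^2 * (1+20*e)^2 - S^2),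
    mul_nonneg (mul_nonneg (by linarith : (0:ℝ) ≤ 1-100*e)
      (by linarith : (0:ℝ) ≤ 1+16*e - d))
      (mul_nonneg (sq_nonneg T) (sq_nonneg (1+20*e))),
    mul_nonneg (sq_nonneg T)
      (by nlinarith : (0:ℝ) ≤ 44*e + 4560*e^2 + 97600*e^3 + 640000*e^4)]

end Stmt1Aux

open Stmt1Aux

/-- There are `ε₀ = ε₀(n) > 0` and `c₁ = c₁(n) > 0` such that for every admissible
cutoff `ξ`, every `|ε| < ε₀` and every `u` differentiable on the unit ball,
`(1 - c₁|ε|) ∫_{B₁} |∇u|² ≤ ∫_{B₁} |∇(u ∘ f_ε)|² ≤ (1 + c₁|ε|) ∫_{B₁} |∇u|²`. -/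
theorem statement1 (n : ℕ) (hn : 2 ≤ n) :
    ∃ ε₀ c₁ : ℝ, 0 < ε₀ ∧ 0 < c₁ ∧
      ∀ ξ : ℝ → ℝ, AdmissibleCutoff ξ → ∀ ε : ℝ, |ε| < ε₀ →
        ∀ u : EuclideanSpace ℝ (Fin n) → ℝ,
          DifferentiableOn ℝ u (Metric.ball (0 : EuclideanSpace ℝ (Fin n)) 1) →
          ENNReal.ofReal (1 - c₁ * |ε|) *
              (∫⁻ x in Metric.ball (0 : EuclideanSpace ℝ (Fin n)) 1,
                ENNReal.ofReal (‖fderiv ℝ u x‖ ^ 2)) ≤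
            (∫⁻ x in Metric.ball (0 : EuclideanSpace ℝ (Fin n)) 1,
              ENNReal.ofReal (‖fderiv ℝ (u ∘ deformMap n (by omega) ξ ε) x‖ ^ 2)) ∧
          (∫⁻ x in Metric.ball (0 : EuclideanSpace ℝ (Fin n)) 1,
              ENNReal.ofReal (‖fderiv ℝ (u ∘ deformMap n (by omega) ξ ε) x‖ ^ 2)) ≤
            ENNReal.ofReal (1 + c₁ * |ε|) *
              (∫⁻ x in Metric.ball (0 : EuclideanSpace ℝ (Fin n)) 1,
                ENNReal.ofReal (‖fderiv ℝ u x‖ ^ 2)) := by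
  classical
  refine ⟨1/100, 100, by norm_num, by norm_num, ?_⟩
  intro ξ hξ ε hεlt u hu
  have hn0 : 0 < n := by omega
  open Stmt1Aux in
  have key :
      ENNReal.ofReal (1 - 100 * |ε|) *
          (∫⁻ x in Metric.ball (0 : EuclideanSpace ℝ (Fin n)) 1,
            ENNReal.ofReal (‖fderiv ℝ u x‖ ^ 2)) ≤
        (∫⁻ x in Metric.ball (0 : EuclideanSpace ℝ (Fin n)) 1,
          ENNReal.ofReal (‖fderiv ℝ (u ∘ deformMap n hn0 ξ ε) x‖ ^ 2)) ∧
      (∫⁻ x in Metric.ball (0 : EuclideanSpace ℝ (Fin n)) 1,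
          ENNReal.ofReal (‖fderiv ℝ (u ∘ deformMap n hn0 ξ ε) x‖ ^ 2)) ≤
        ENNReal.ofReal (1 + 100 * |ε|) *
          (∫⁻ x in Metric.ball (0 : EuclideanSpace ℝ (Fin n)) 1,
            ENNReal.ofReal (‖fderiv ℝ u x‖ ^ 2)) := by
    have hε' : |ε| ≤ 1/100 := le_of_lt hεlt
    have hε0 : (0:ℝ) ≤ |ε| := abs_nonneg ε
    set L := lastCoord n hn0 with hL
    set f := deformMap n hn0 ξ ε with hfdef
    set Dg : EuclideanSpace ℝ (Fin n) → (EuclideanSpace ℝ (Fin n) →L[ℝ] ℝ) :=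
      fun x => fderiv ℝ (gf n hn0 ξ ε) x with hDgdef
    set A : EuclideanSpace ℝ (Fin n) → (EuclideanSpace ℝ (Fin n) →L[ℝ] EuclideanSpace ℝ (Fin n)) :=
      fun x => Amap hn0 (Dg x) with hAdef
    have hgder : ∀ x ∈ Metric.ball (0 : EuclideanSpace ℝ (Fin n)) 1,
        HasFDerivAt (gf n hn0 ξ ε) (Dg x) x :=
      fun x hx => (gf_diff hn0 hξ hx).hasFDerivAt
    have hDgn : ∀ x ∈ Metric.ball (0 : EuclideanSpace ℝ (Fin n)) 1, ‖Dg x‖ ≤ 16 * |ε| :=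
      fun x hx => gf_fderiv_norm hn0 hξ hx
    have hfder : ∀ x ∈ Metric.ball (0 : EuclideanSpace ℝ (Fin n)) 1,
        HasFDerivAt f (A x) x := by
      intro x hx
      have h1 := (hgder x hx).smul_const (EuclideanSpace.single L (1:ℝ))
      exact (hasFDerivAt_id x).add h1
    have ha : ∀ x ∈ Metric.ball (0 : EuclideanSpace ℝ (Fin n)) 1,
        |Dg x (EuclideanSpace.single L (1:ℝ))| ≤ 16 * |ε| := by
      intro x hx
      have h1 : |Dg x (EuclideanSpace.single L (1:ℝ))| ≤ ‖Dg x‖ * ‖EuclideanSpace.single L (1:ℝ)‖ :=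
        (Dg x).le_opNorm _
      rw [EuclideanSpace.norm_single, norm_one, mul_one] at h1
      exact h1.trans (hDgn x hx)
    have hdet : ∀ x, (A x).det = 1 + Dg x (EuclideanSpace.single L (1:ℝ)) :=
      fun x => Amap_det hn0 (Dg x)
    have hdet_lb : ∀ x ∈ Metric.ball (0 : EuclideanSpace ℝ (Fin n)) 1,
        1 - 16 * |ε| ≤ |(A x).det| := by
      intro x hx
      rw [hdet x]
      have := abs_le.1 (ha x hx)
      rw [abs_of_pos (by linarith : (0:ℝ) < 1 + Dg x (EuclideanSpace.single L (1:ℝ)))]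
      linarith
    have hdet_ub : ∀ x ∈ Metric.ball (0 : EuclideanSpace ℝ (Fin n)) 1,
        |(A x).det| ≤ 1 + 16 * |ε| := by
      intro x hx
      rw [hdet x]
      have := abs_le.1 (ha x hx)
      rw [abs_of_pos (by linarith : (0:ℝ) < 1 + Dg x (EuclideanSpace.single L (1:ℝ)))]
      linarith
    have hdet_ne : ∀ x ∈ Metric.ball (0 : EuclideanSpace ℝ (Fin n)) 1,
        1 + Dg x (EuclideanSpace.single L (1:ℝ)) ≠ 0 := by
      intro x hx h0
      have h1 := (abs_le.1 (ha x hx)).1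
      have h2 : Dg x (EuclideanSpace.single L (1:ℝ)) = -1 := by linarith
      rw [h2] at h1
      linarith
    have hCV : ∀ H : EuclideanSpace ℝ (Fin n) → ENNReal,
        (∫⁻ y in Metric.ball (0 : EuclideanSpace ℝ (Fin n)) 1, H y)
          = ∫⁻ x in Metric.ball (0 : EuclideanSpace ℝ (Fin n)) 1,
              ENNReal.ofReal |(A x).det| * H (f x) := by
      intro H
      conv_lhs => rw [← deform_image (ε := ε) hn0 hξ hε']
      exact lintegral_image_eq_lintegral_abs_det_fderiv_mul volume measurableSet_ball
        (fun x hx => (hfder x hx).hasFDerivWithinAt) (deform_injOn hn0 hξ hε') H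
    -- chain rule facts
    have hux : ∀ x ∈ Metric.ball (0 : EuclideanSpace ℝ (Fin n)) 1,
        DifferentiableAt ℝ u (f x) := fun x hx =>
      hu.differentiableAt (isOpen_ball.mem_nhds (deform_mem_ball hn0 hξ hε' hx))
    have hcomp : ∀ x ∈ Metric.ball (0 : EuclideanSpace ℝ (Fin n)) 1,
        fderiv ℝ (u ∘ f) x = (fderiv ℝ u (f x)).comp (A x) := fun x hx =>
      ((hux x hx).hasFDerivAt.comp x (hfder x hx)).fderiv
    have hAn : ∀ x ∈ Metric.ball (0 : EuclideanSpace ℝ (Fin n)) 1,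
        ‖A x‖ ≤ 1 + 16 * |ε| := by
      intro x hx
      exact (Amap_norm_le hn0 (Dg x)).trans (by linarith [hDgn x hx])
    have hTle : ∀ x ∈ Metric.ball (0 : EuclideanSpace ℝ (Fin n)) 1,
        ‖fderiv ℝ (u ∘ f) x‖ ≤ ‖fderiv ℝ u (f x)‖ * (1 + 16 * |ε|) := by
      intro x hx
      rw [hcomp x hx]
      calc ‖(fderiv ℝ u (f x)).comp (A x)‖ ≤ ‖fderiv ℝ u (f x)‖ * ‖A x‖ :=
            ContinuousLinearMap.opNorm_comp_le _ _
        _ ≤ ‖fderiv ℝ u (f x)‖ * (1 + 16 * |ε|) :=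
            mul_le_mul_of_nonneg_left (hAn x hx) (norm_nonneg _)
    have hSle : ∀ x ∈ Metric.ball (0 : EuclideanSpace ℝ (Fin n)) 1,
        ‖fderiv ℝ u (f x)‖ ≤ ‖fderiv ℝ (u ∘ f) x‖ * (1 + 20 * |ε|) := by
      intro x hx
      have hid := Amap_comp_Bmap hn0 (Dg x) (hdet_ne x hx)
      have hS : fderiv ℝ u (f x) = (fderiv ℝ (u ∘ f) x).comp (Bmap hn0 (Dg x)) := by
        rw [hcomp x hx, ContinuousLinearMap.comp_assoc, hid, ContinuousLinearMap.comp_id]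
      have hBn : ‖Bmap hn0 (Dg x)‖ ≤ 1 + 20 * |ε| := by
        refine (Bmap_norm_le hn0 (Dg x)).trans ?_
        have h1 : |(1 + Dg x (EuclideanSpace.single L (1:ℝ)))⁻¹| ≤ (1 - 16 * |ε|)⁻¹ := by
          rw [abs_inv]
          apply inv_anti₀ (by linarith)
          have h2 := abs_le.1 (ha x hx)
          rw [abs_of_pos (by linarith [h2.1] : (0:ℝ) < 1 + Dg x (EuclideanSpace.single L (1:ℝ)))]
          linarith [h2.1]
        have h3 : |(1 + Dg x (EuclideanSpace.single L (1:ℝ)))⁻¹| * ‖Dg x‖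
            ≤ (1 - 16 * |ε|)⁻¹ * (16 * |ε|) :=
          mul_le_mul h1 (hDgn x hx) (norm_nonneg _) (inv_nonneg.2 (by linarith))
        have h4 : (1 - 16 * |ε|)⁻¹ * (16 * |ε|) ≤ 20 * |ε| := by
          rw [inv_mul_le_iff₀ (by linarith : (0:ℝ) < 1 - 16 * |ε|)]
          nlinarith
        linarith
      rw [hS]
      calc ‖(fderiv ℝ (u ∘ f) x).comp (Bmap hn0 (Dg x))‖
          ≤ ‖fderiv ℝ (u ∘ f) x‖ * ‖Bmap hn0 (Dg x)‖ :=
            ContinuousLinearMap.opNorm_comp_le _ _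
        _ ≤ ‖fderiv ℝ (u ∘ f) x‖ * (1 + 20 * |ε|) :=
            mul_le_mul_of_nonneg_left hBn (norm_nonneg _)
    constructor
    · -- lower bound
      by_cases hc : 1 - 100 * |ε| ≤ 0
      · rw [ENNReal.ofReal_of_nonpos hc, zero_mul]
        exact zero_le
      · push_neg at hc
        have hlow_pt : ∀ x ∈ Metric.ball (0 : EuclideanSpace ℝ (Fin n)) 1,
            ENNReal.ofReal (1 - 100 * |ε|) *
              (ENNReal.ofReal |(A x).det| * ENNReal.ofReal (‖fderiv ℝ u (f x)‖ ^ 2))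
            ≤ ENNReal.ofReal (‖fderiv ℝ (u ∘ f) x‖ ^ 2) := by
          intro x hx
          rw [← ENNReal.ofReal_mul (abs_nonneg _), ← ENNReal.ofReal_mul (by linarith)]
          apply ENNReal.ofReal_le_ofReal
          have hS2 : ‖fderiv ℝ u (f x)‖ ^ 2
              ≤ (‖fderiv ℝ (u ∘ f) x‖ * (1 + 20 * |ε|)) ^ 2 :=
            pow_le_pow_left₀ (norm_nonneg _) (hSle x hx) 2
          rw [mul_pow] at hS2
          exact real_lower hε0 hε' hS2 (abs_nonneg _) (hdet_ub x hx) hc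
        calc ENNReal.ofReal (1 - 100 * |ε|) *
              ∫⁻ x in Metric.ball (0 : EuclideanSpace ℝ (Fin n)) 1,
                ENNReal.ofReal (‖fderiv ℝ u x‖ ^ 2)
            = ENNReal.ofReal (1 - 100 * |ε|) *
              ∫⁻ x in Metric.ball (0 : EuclideanSpace ℝ (Fin n)) 1,
                ENNReal.ofReal |(A x).det| * ENNReal.ofReal (‖fderiv ℝ u (f x)‖ ^ 2) := by
              rw [← hCV (fun y => ENNReal.ofReal (‖fderiv ℝ u y‖ ^ 2))]
          _ = ∫⁻ x in Metric.ball (0 : EuclideanSpace ℝ (Fin n)) 1,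
                ENNReal.ofReal (1 - 100 * |ε|) *
                  (ENNReal.ofReal |(A x).det| * ENNReal.ofReal (‖fderiv ℝ u (f x)‖ ^ 2)) :=
              (lintegral_const_mul' _ _ ENNReal.ofReal_ne_top).symm
          _ ≤ ∫⁻ x in Metric.ball (0 : EuclideanSpace ℝ (Fin n)) 1,
                ENNReal.ofReal (‖fderiv ℝ (u ∘ f) x‖ ^ 2) := by
              refine lintegral_mono_ae ?_
              rw [ae_restrict_iff' measurableSet_ball]
              exact ae_of_all _ hlow_pt
    · -- upper bound
      have hup_pt : ∀ x ∈ Metric.ball (0 : EuclideanSpace ℝ (Fin n)) 1,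
          ENNReal.ofReal (‖fderiv ℝ (u ∘ f) x‖ ^ 2)
            ≤ ENNReal.ofReal (1 + 100 * |ε|) *
              (ENNReal.ofReal |(A x).det| * ENNReal.ofReal (‖fderiv ℝ u (f x)‖ ^ 2)) := by
        intro x hx
        rw [← ENNReal.ofReal_mul (abs_nonneg _), ← ENNReal.ofReal_mul (by linarith)]
        apply ENNReal.ofReal_le_ofReal
        have hT2 : ‖fderiv ℝ (u ∘ f) x‖ ^ 2
            ≤ (‖fderiv ℝ u (f x)‖ * (1 + 16 * |ε|)) ^ 2 :=
          pow_le_pow_left₀ (norm_nonneg _) (hTle x hx) 2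
        rw [mul_pow] at hT2
        exact real_upper hε0 hε' (norm_nonneg _) hT2 (hdet_lb x hx)
      calc (∫⁻ x in Metric.ball (0 : EuclideanSpace ℝ (Fin n)) 1,
              ENNReal.ofReal (‖fderiv ℝ (u ∘ f) x‖ ^ 2))
          ≤ ∫⁻ x in Metric.ball (0 : EuclideanSpace ℝ (Fin n)) 1,
              ENNReal.ofReal (1 + 100 * |ε|) *
                (ENNReal.ofReal |(A x).det| * ENNReal.ofReal (‖fderiv ℝ u (f x)‖ ^ 2)) := by
            refine lintegral_mono_ae ?_
            rw [ae_restrict_iff' measurableSet_ball]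
            exact ae_of_all _ hup_pt
        _ = ENNReal.ofReal (1 + 100 * |ε|) *
              ∫⁻ x in Metric.ball (0 : EuclideanSpace ℝ (Fin n)) 1,
                ENNReal.ofReal |(A x).det| * ENNReal.ofReal (‖fderiv ℝ u (f x)‖ ^ 2) :=
            lintegral_const_mul' _ _ ENNReal.ofReal_ne_top
        _ = ENNReal.ofReal (1 + 100 * |ε|) *
              ∫⁻ x in Metric.ball (0 : EuclideanSpace ℝ (Fin n)) 1,
                ENNReal.ofReal (‖fderiv ℝ u x‖ ^ 2) := by
            rw [← hCV (fun y => ENNReal.ofReal (‖fderiv ℝ u y‖ ^ 2))]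
  exact key

end
end

section
/- Let Ω ⊆ ℝⁿ be an open set and let S ⊆ Ω be an 𝓗ⁿ⁻¹-measurable set with 𝓗ⁿ⁻¹(S) < ∞. Assume S satisfies the mass ratio lower bound in Ω: for every compact set K ⊆ Ω there exist constants r_K > 0 and λ_K > 0 such that 𝓗ⁿ⁻¹(S ∩ B_r(x)) ≥ λ_K rⁿ⁻¹ for every x ∈ K ∩ cl(S) and every 0 < r < r_K, where cl(S) is the closure of S. Then 𝓗ⁿ⁻¹((cl(S) \ S) ∩ Ω) = 0. -/
/-!
Let `ν = 𝓗ⁿ⁻¹ ⌊ S`, a finite measure, and `A = (cl S \ S) ∩ K` for a compact `K ⊆ Ω`. Every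
`a ∈ A` satisfies `ν(B_r(a)) ≥ λ rⁿ⁻¹` for small `r`, while `ν(A) = 0`. Given an open `U ⊇ A`,
choose at each `a ∈ A` a small ball inside `U`; a disjoint Vitali subfamily whose fivefold
enlargements cover `A` gives `𝓗ⁿ⁻¹_δ(A) ≤ 10ⁿ⁻¹ λ⁻¹ ν(U)` for every `δ`. Outer regularity of `ν`
makes `ν(U)` as small as we like, so `𝓗ⁿ⁻¹(A) = 0`, and the local statements glue along `Ω`.
-/

open Set MeasureTheory Metric Filter Topology
open scoped ENNReal

universe u

theorem hausdorffMeasure_le_of_forall_countable_cover {X : Type u} [EMetricSpace X]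
    [MeasurableSpace X] [BorelSpace X] (d : ℝ) (s : Set X) (M : ℝ≥0∞)
    (h : ∀ δ : ℝ, 0 < δ → ∃ (ι : Type u) (_ : Countable ι) (t : ι → Set X),
      s ⊆ ⋃ i, t i ∧ (∀ i, ediam (t i) ≤ ENNReal.ofReal δ) ∧ ∑' i, ediam (t i) ^ d ≤ M) :
    μH[d] s ≤ M := by
  choose ι _ t hst ht hsum using fun n : ℕ => h (1 / (n + 1)) Nat.one_div_pos_of_nat
  have hδ : Tendsto (fun n : ℕ => ENNReal.ofReal (1 / (n + 1))) atTop (𝓝 0) := by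
    simpa using ENNReal.tendsto_ofReal tendsto_one_div_add_atTop_nhds_zero_nat
  calc μH[d] s ≤ liminf (fun n => ∑' i, ediam (t n i) ^ d) atTop :=
        Measure.hausdorffMeasure_le_liminf_tsum d s _ hδ t (.of_forall ht) (.of_forall hst)
    _ ≤ M := liminf_le_of_frequently_le' (.of_forall hsum)

section

variable {X : Type*} [MetricSpace X]

theorem ediam_closedBall_le (x : X) (r : ℝ) : ediam (closedBall x r) ≤ ENNReal.ofReal (2 * r) :=
  ediam_le_of_forall_dist_le fun y hy z hz => by
    linarith [dist_triangle_right y z x, mem_closedBall.1 hy, mem_closedBall.1 hz]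

theorem ediam_closedBall_rpow_le_mul (x : X) {ρ d c : ℝ} (hρ : 0 < ρ) (hd : 0 ≤ d) (hc : 0 < c) :
    ediam (closedBall x (5 * ρ)) ^ d ≤ ENNReal.ofReal (10 ^ d / c) * ENNReal.ofReal (c * ρ ^ d) :=
  calc ediam (closedBall x (5 * ρ)) ^ d ≤ ENNReal.ofReal (10 * ρ) ^ d := by
        gcongr
        exact (ediam_closedBall_le x _).trans_eq (by ring_nf)
    _ = ENNReal.ofReal (10 ^ d / c) * ENNReal.ofReal (c * ρ ^ d) := by
        rw [ENNReal.ofReal_rpow_of_pos (by positivity), ← ENNReal.ofReal_mul (by positivity),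
          Real.mul_rpow (by norm_num) hρ.le]
        field_simp

theorem exists_pos_radius_closedBall_subset {U : Set X} (hU : IsOpen U) {x : X} (hx : x ∈ U)
    {R : ℝ} (hR : 0 < R) : ∃ ρ, 0 < ρ ∧ ρ < R ∧ closedBall x ρ ⊆ U := by
  have : ∀ᶠ ρ in 𝓝[>] (0 : ℝ), 0 < ρ ∧ ρ < R ∧ closedBall x ρ ⊆ U := by
    filter_upwards [self_mem_nhdsWithin, nhdsWithin_le_nhds (eventually_lt_nhds hR),
      nhdsWithin_le_nhds (eventually_closedBall_subset (hU.mem_nhds hx))] with ρ h₀ hR hU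
    exact ⟨h₀, hR, hU⟩
  exact this.exists

variable [MeasurableSpace X] [BorelSpace X] [TopologicalSpace.SeparableSpace X]

theorem hausdorffMeasure_le_mul_of_le_measure_ball (ν : Measure X) {A U : Set X} (hU : IsOpen U)
    (hAU : A ⊆ U) {d c r₀ : ℝ} (hd : 0 ≤ d) (hc : 0 < c) (hr₀ : 0 < r₀)
    (hν : ∀ a ∈ A, ∀ r, 0 < r → r < r₀ → ENNReal.ofReal (c * r ^ d) ≤ ν (ball a r)) :
    μH[d] A ≤ ENNReal.ofReal (10 ^ d / c) * ν U := by
  refine hausdorffMeasure_le_of_forall_countable_cover d A _ fun δ hδ => ?_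
  have hρ : ∀ a ∈ A, ∃ ρ, 0 < ρ ∧ ρ < min r₀ (δ / 10) ∧ closedBall a ρ ⊆ U := fun a ha =>
    exists_pos_radius_closedBall_subset hU (hAU ha) (by positivity)
  choose! ρ hρ₀ hρr hρU using hρ
  obtain ⟨u, huA, hdisj, hcov⟩ := Vitali.exists_disjoint_subfamily_covering_enlargement_closedBall
    A id ρ (δ / 10) (fun a ha => ((hρr a ha).trans_le (min_le_right _ _)).le) 5 (by norm_num)
  have hu : u.Countable := hdisj.countable_of_nonempty_interior fun b hb =>
    ⟨b, ball_subset_interior_closedBall (mem_ball_self (hρ₀ b (huA hb)))⟩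
  have : Countable u := hu.to_subtype
  refine ⟨u, this, fun b => closedBall b (5 * ρ b), fun a ha => ?_, fun b => ?_, ?_⟩
  · obtain ⟨b, hb, hab⟩ := hcov a ha
    exact mem_iUnion.2 ⟨⟨b, hb⟩, hab (mem_closedBall_self (hρ₀ a ha).le)⟩
  · refine (ediam_closedBall_le _ _).trans (ENNReal.ofReal_le_ofReal ?_)
    linarith [(hρr b (huA b.2)).trans_le (min_le_right _ _)]
  · calc ∑' b : u, ediam (closedBall (b : X) (5 * ρ b)) ^ d
        ≤ ∑' b : u, ENNReal.ofReal (10 ^ d / c) * ν (closedBall b (ρ b)) := by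
          refine ENNReal.tsum_le_tsum fun b => ?_
          refine (ediam_closedBall_rpow_le_mul _ (hρ₀ b (huA b.2)) hd hc).trans ?_
          gcongr
          exact (hν b (huA b.2) _ (hρ₀ b (huA b.2)) ((hρr b (huA b.2)).trans_le
            (min_le_left _ _))).trans (measure_mono ball_subset_closedBall)
      _ = ENNReal.ofReal (10 ^ d / c) * ν (⋃ b : u, closedBall b (ρ b)) := by
          rw [ENNReal.tsum_mul_left, measure_iUnion (f := fun b : u => closedBall (b : X) (ρ b))
            (hdisj.subtype _ _) fun _ => measurableSet_closedBall]
      _ ≤ ENNReal.ofReal (10 ^ d / c) * ν U := by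
          gcongr
          exact iUnion_subset fun b => hρU b (huA b.2)

theorem hausdorffMeasure_eq_zero_of_le_measure_ball (ν : Measure X) [ν.OuterRegular] {A : Set X}
    (hA : ν A = 0) {d c r₀ : ℝ} (hd : 0 ≤ d) (hc : 0 < c) (hr₀ : 0 < r₀)
    (hν : ∀ a ∈ A, ∀ r, 0 < r → r < r₀ → ENNReal.ofReal (c * r ^ d) ≤ ν (ball a r)) :
    μH[d] A = 0 := by
  refine nonpos_iff_eq_zero.1 (le_of_forall_gt fun ε hε => ?_)
  obtain ⟨U, hAU, hU, hUε⟩ := A.exists_isOpen_lt_of_lt (ε / ENNReal.ofReal (10 ^ d / c))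
    (hA ▸ ENNReal.div_pos hε.ne' ENNReal.ofReal_ne_top)
  calc μH[d] A ≤ ENNReal.ofReal (10 ^ d / c) * ν U :=
        hausdorffMeasure_le_mul_of_le_measure_ball ν hU hAU hd hc hr₀ hν
    _ < ε := mul_comm (ν U) _ ▸ ENNReal.mul_lt_of_lt_div hUε

end

theorem statement4_general (n : ℕ) (hn : 2 ≤ n)
    (Ω : Set (EuclideanSpace ℝ (Fin n))) (hΩ : IsOpen Ω)
    (S : Set (EuclideanSpace ℝ (Fin n))) (hSm : MeasurableSet S)
    (hSfin : μH[(n : ℝ) - 1] S < ⊤)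
    (hmass : ∀ K : Set (EuclideanSpace ℝ (Fin n)), K ⊆ Ω → IsCompact K →
      ∃ rK : ℝ, 0 < rK ∧ ∃ lK : ℝ, 0 < lK ∧
        ∀ x ∈ K ∩ closure S, ∀ r : ℝ, 0 < r → r < rK →
          ENNReal.ofReal (lK * r ^ (n - 1)) ≤ μH[(n : ℝ) - 1] (S ∩ Metric.ball x r)) :
    μH[(n : ℝ) - 1] ((closure S \ S) ∩ Ω) = 0 := by
  have hd : (0 : ℝ) ≤ n - 1 := by
    rw [sub_nonneg, Nat.one_le_cast]
    omega
  have hpow (r : ℝ) : r ^ (n - 1) = r ^ ((n : ℝ) - 1) := by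
    rw [← Real.rpow_natCast, Nat.cast_sub (by omega), Nat.cast_one]
  have : IsFiniteMeasure (μH[(n : ℝ) - 1].restrict S) := ⟨by rwa [Measure.restrict_apply_univ]⟩
  refine measure_null_of_locally_null _ fun x hx => ?_
  obtain ⟨K, hK, hxK, hKΩ⟩ := exists_compact_subset hΩ hx.2
  obtain ⟨rK, hrK, lK, hlK, hmassK⟩ := hmass K hKΩ hK
  refine ⟨_ ∩ K, inter_mem_nhdsWithin _ (mem_interior_iff_mem_nhds.1 hxK), ?_⟩
  refine hausdorffMeasure_eq_zero_of_le_measure_ball (μH[(n : ℝ) - 1].restrict S) ?_ hd hlK hrK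
    fun a ha r hr hrK => ?_
  · rw [Measure.restrict_apply' hSm, (disjoint_left.2 fun y hy => hy.1.1.2).inter_eq,
      measure_empty]
  · rw [Measure.restrict_apply measurableSet_ball, inter_comm, ← hpow]
    exact hmassK a ⟨ha.2, ha.1.1.1⟩ r hr hrK

/-- If `S ⊆ Ω` is `𝓗ⁿ⁻¹`-measurable with finite `𝓗ⁿ⁻¹`-measure and satisfies the
mass ratio lower bound in the open set `Ω`, then `𝓗ⁿ⁻¹((cl S \ S) ∩ Ω) = 0`. -/
theorem statement4 (n : ℕ) (hn : 2 ≤ n)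
    (Ω : Set (EuclideanSpace ℝ (Fin n))) (hΩ : IsOpen Ω)
    (S : Set (EuclideanSpace ℝ (Fin n))) (hSΩ : S ⊆ Ω) (hSm : MeasurableSet S)
    (hSfin : μH[(n : ℝ) - 1] S < ⊤)
    (hmass : ∀ K : Set (EuclideanSpace ℝ (Fin n)), K ⊆ Ω → IsCompact K →
      ∃ rK : ℝ, 0 < rK ∧ ∃ lK : ℝ, 0 < lK ∧
        ∀ x ∈ K ∩ closure S, ∀ r : ℝ, 0 < r → r < rK →
          ENNReal.ofReal (lK * r ^ (n - 1)) ≤ μH[(n : ℝ) - 1] (S ∩ Metric.ball x r)) :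
    μH[(n : ℝ) - 1] ((closure S \ S) ∩ Ω) = 0 :=
  statement4_general n hn Ω hΩ S hSm hSfin hmass
end
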